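/- Let p be a prime, k a field of characteristic p, and n a natural number. Let ∂ be the unique k-linear derivation of R = k[x_1,…,x_n] with ∂(x_i) = x_i^2 for all i. Let a_1,…,a_n be integers and set f = ∑_{i=1}^n a_i x_i ∈ R (coefficients taken via the canonical map ℤ → k). Then the k-linear operator D : R → R defined by D(g) = ∂(g) + f·g satisfies D^p = 0. (Thus for each linear polynomial f with prime-field coefficients, the twisted rank-one module R^f is a module over H_q = k[∂_q]/(∂_q^p).) -/

import Mathlib

/-!
The operator `D + f` splits as `∑ i, E_i` with `E_i = x_i² ∂_i + a_i x_i`. On monomials,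
`E_i (x^s) = (s_i + a_i) x^(s + e_i)`, so the `E_i` pairwise commute and
`E_i^p (x^s) = ∏_{t < p} (s_i + a_i + t) x^(s + p e_i)`; the coefficient is a product of `p`
consecutive integers, hence vanishes in characteristic `p`. For commuting summands in
characteristic `p` the `p`-th power of the sum is the sum of the `p`-th powers.
-/

open MvPolynomial

theorem Derivation.finset_sum_apply {R A M ι : Type*} [CommSemiring R] [CommSemiring A]
    [AddCommMonoid M] [Algebra R A] [Module A M] [Module R M] (s : Finset ι)
    (D : ι → Derivation R A M) (a : A) : (∑ i ∈ s, D i) a = ∑ i ∈ s, D i a := by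
  rw [← Derivation.coeFnAddMonoidHom_apply (∑ i ∈ s, D i), map_sum, Finset.sum_apply]
  rfl

theorem sum_pow_char_of_commute {A ι : Type*} [Semiring A] (p : ℕ) [Fact p.Prime] [CharP A p]
    (s : Finset ι) (f : ι → A) (hf : ∀ i j, Commute (f i) (f j)) :
    (∑ i ∈ s, f i) ^ p = ∑ i ∈ s, f i ^ p := by
  classical
  induction s using Finset.induction with
  | empty => simp [zero_pow (Fact.out : p.Prime).ne_zero]
  | insert i s hi ih =>
    rw [Finset.sum_insert hi, Finset.sum_insert hi,
      add_pow_char_of_commute _ (Commute.sum_right s f (f i) fun j _ => hf i j), ih]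

theorem CharP.prod_range_intCast_add_eq_zero {R : Type*} [CommRing R] (p : ℕ) [NeZero p]
    [CharP R p] (c : ℤ) :
    ∏ t ∈ Finset.range p, ((c : R) + t) = 0 := by
  have hp : (0 : ℤ) < p := by exact_mod_cast Nat.pos_of_neZero p
  refine Finset.prod_eq_zero (i := ((-c) % p).toNat) ?_ ?_
  · rw [Finset.mem_range]; have := Int.emod_lt_of_pos (-c) hp; omega
  · have hdvd : (p : ℤ) ∣ c + ((-c) % p).toNat := by
      rw [Int.toNat_of_nonneg (Int.emod_nonneg _ hp.ne'), Int.dvd_iff_emod_eq_zero, Int.add_emod,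
        Int.emod_emod_of_dvd _ dvd_rfl, ← Int.add_emod, add_neg_cancel, Int.zero_emod]
    exact_mod_cast (CharP.intCast_eq_zero_iff R p _).2 hdvd

namespace MvPolynomial
variable {R σ : Type*}

section CommSemiring
variable [CommSemiring R]

noncomputable def twistedPDeriv (i : σ) (c : R) : Module.End R (MvPolynomial σ R) :=
  ((X i ^ 2 : MvPolynomial σ R) • pderiv i :
      Derivation R (MvPolynomial σ R) (MvPolynomial σ R)).toLinearMap
    + LinearMap.mulLeft R (c • X i)

theorem twistedPDeriv_monomial (i : σ) (c : R) (s : σ →₀ ℕ) (r : R) :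
    twistedPDeriv i c (monomial s r)
      = ((s i : R) + c) • monomial (s + Finsupp.single i 1) r := by
  have hX : X i * monomial s r = monomial (s + Finsupp.single i 1) r := by
    rw [monomial_add_single, pow_one, mul_comm]
  have hderiv : (X i ^ 2 : MvPolynomial σ R) * pderiv i (monomial s r)
      = (s i : R) • monomial (s + Finsupp.single i 1) r := by
    rw [sq, mul_assoc, X_mul_pderiv_monomial, mul_smul_comm, hX, Nat.cast_smul_eq_nsmul]
  simp only [twistedPDeriv, LinearMap.add_apply, Derivation.coeFn_coe, Derivation.smul_apply,
    smul_eq_mul, hderiv, LinearMap.mulLeft_apply, smul_mul_assoc, hX, add_smul]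

theorem twistedPDeriv_pow_monomial (i : σ) (c : R) (m : ℕ) (s : σ →₀ ℕ) (r : R) :
    (twistedPDeriv i c ^ m) (monomial s r)
      = (∏ t ∈ Finset.range m, ((s i : R) + c + (t : R)))
          • monomial (s + Finsupp.single i m) r := by
  induction m generalizing s with
  | zero => simp
  | succ m ih =>
    rw [pow_succ, Module.End.mul_apply, twistedPDeriv_monomial, map_smul, ih, smul_smul,
      Finset.prod_range_succ', add_assoc s, ← Finsupp.single_add, add_comm 1 m]
    congr 1
    · rw [mul_comm]
      congr 1
      · refine Finset.prod_congr rfl fun t _ => ?_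
        simp only [Finsupp.add_apply, Finsupp.single_eq_same]
        push_cast; ring
      · simp

theorem commute_twistedPDeriv (a : σ → R) (i j : σ) :
    Commute (twistedPDeriv i (a i)) (twistedPDeriv j (a j)) := by
  classical
  rcases eq_or_ne i j with rfl | hij
  · exact Commute.refl _
  refine linearMap_ext fun s => LinearMap.ext fun r => ?_
  simp only [LinearMap.comp_apply, Module.End.mul_apply, twistedPDeriv_monomial, map_smul,
    smul_smul, Finsupp.add_apply, Finsupp.single_apply, hij, hij.symm, if_false, add_zero]
  rw [add_right_comm s, mul_comm]

theorem derivation_eq_sum_smul_pderiv [Fintype σ]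
    (D : Derivation R (MvPolynomial σ R) (MvPolynomial σ R)) :
    D = ∑ i, D (X i) • pderiv i := by
  classical
  refine derivation_ext fun j => ?_
  simp [Derivation.finset_sum_apply, pderiv_X, Pi.single_apply]

theorem toLinearMap_add_mulLeft_eq_sum_twistedPDeriv [Fintype σ]
    (D : Derivation R (MvPolynomial σ R) (MvPolynomial σ R)) (hD : ∀ i, D (X i) = X i ^ 2)
    (c : σ → R) :
    D.toLinearMap + LinearMap.mulLeft R (∑ i, c i • X i) = ∑ i, twistedPDeriv i (c i) := by
  rw [derivation_eq_sum_smul_pderiv D]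
  refine LinearMap.ext fun g => ?_
  simp [twistedPDeriv, hD, Finset.sum_add_distrib, Finset.sum_mul, Derivation.finset_sum_apply]

end CommSemiring

theorem twistedPDeriv_intCast_pow_char [CommRing R] (p : ℕ) [NeZero p] [CharP R p] (i : σ)
    (a : ℤ) :
    twistedPDeriv i (a : R) ^ p = 0 := by
  refine linearMap_ext fun s => LinearMap.ext fun r => ?_
  have h := CharP.prod_range_intCast_add_eq_zero (R := R) p (s i + a)
  push_cast at h
  simp [twistedPDeriv_pow_monomial, h]

end MvPolynomial

theorem stmt_6 (p : ℕ) (hp : p.Prime) (k : Type*) [Field k] [CharP k p] (n : ℕ)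
    (D : Derivation k (MvPolynomial (Fin n) k) (MvPolynomial (Fin n) k))
    (hD : ∀ i, D (MvPolynomial.X i) = MvPolynomial.X i ^ 2)
    (a : Fin n → ℤ) :
    ((D.toLinearMap
        + LinearMap.mulLeft k (Finset.univ.sum fun i => a i • MvPolynomial.X i) :
      Module.End k (MvPolynomial (Fin n) k)) ^ p) = 0 := by
  have : Fact p.Prime := ⟨hp⟩
  have : CharP (Module.End k (MvPolynomial (Fin n) k)) p :=
    charP_of_injective_algebraMap (algebraMap k _).injective p
  simp_rw [← Int.cast_smul_eq_zsmul k, toLinearMap_add_mulLeft_eq_sum_twistedPDeriv D hD,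
    sum_pow_char_of_commute p _ _ (commute_twistedPDeriv fun i => (a i : k)),
    twistedPDeriv_intCast_pow_char, Finset.sum_const_zero]
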